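/- arXiv:2002.04661 — 2 statements merged into one kernel-verified Lean document; each statement's English description precedes it below -/
import Mathlib

section
/- Let (R, m, k) be a Noetherian normal local domain and let C be a finitely generated R-module satisfying Serre's condition (S₂). If M₁, ..., M_t are finitely generated rank-1 R-modules satisfying Serre's condition (S₂) that are pairwise non-isomorphic (i.e., they represent distinct elements of the divisor class group of R), and each M_i is a direct summand of C, then the direct sum M₁ ⊕ ⋯ ⊕ M_t is a direct summand of C. -/
open IsLocalRing

/-- `M` is a direct summand of `N`: there is a split injection of `M` into `N`. -/
def IsDirectSummand (R M N : Type*) [CommRing R] [AddCommGroup M] [Module R M]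
    [AddCommGroup N] [Module R N] : Prop :=
  ∃ (ι : M →ₗ[R] N) (π : N →ₗ[R] M), π ∘ₗ ι = LinearMap.id

/-- A module `M` over a Noetherian ring `R` satisfies Serre's condition `(S₂)`:
for every prime `P` of `R`, `depth_{R_P}(M_P) ≥ min(2, dim R_P)`, expressed by the
existence, for each `n ≤ min(2, dim R_P)`, of a length-`n` weakly regular sequence on
`M_P` consisting of elements of the maximal ideal of `R_P`. -/
def IsS2 (R M : Type*) [CommRing R] [AddCommGroup M] [Module R M] : Prop :=
  ∀ (P : Ideal R) [P.IsPrime], ∀ n : ℕ,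
    (n : WithBot ℕ∞) ≤ min 2 (ringKrullDim (Localization.AtPrime P)) →
    ∃ rs : List (Localization.AtPrime P), rs.length = n ∧
      (∀ x ∈ rs, x ∈ maximalIdeal (Localization.AtPrime P)) ∧
      RingTheory.Sequence.IsWeaklyRegular (LocalizedModule P.primeCompl M) rs

/-- `M` has rank `1` over the domain `R`, i.e. `dim_{Frac R} (M ⊗_R Frac R) = 1`. -/
def RankOne (R M : Type*) [CommRing R] [AddCommGroup M] [Module R M] : Prop :=
  Module.rank (FractionRing R) (LocalizedModule (nonZeroDivisors R) M) = 1

/-!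
An `(S₂)` module over a Noetherian domain is torsion-free: a nonzero associated prime `P` would
give `depth M_P = 0` although `dim R_P ≥ 1`. Every endomorphism of a finitely generated
torsion-free rank-one module `N` over a normal domain is multiplication by an element of `R`: on
`N ⊗ Frac R` it is a scalar of `Frac R` stabilising the lattice `N`, hence integral over `R`. So
each composite `M i → M j → M i` with `i ≠ j` is multiplication by some `r`, and `r` is not a unit
since otherwise `M i ≅ M j`. Over a local ring the summands then split off one at a time: if
`C = M₀ ⊕ C'`, the composite `M j → C → C' → C → M j` is `1 - r` for `r` the composite through
`M₀`, a unit, so `M j` is a direct summand of `C'`.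
-/

section S2

variable {R : Type*} [CommRing R] [IsDomain R] {N : Type*} [AddCommGroup N] [Module R N]

theorem one_le_ringKrullDim_localization_atPrime {P : Ideal R} [P.IsPrime] (hP : P ≠ ⊥) :
    1 ≤ ringKrullDim (Localization.AtPrime P) := by
  rw [IsLocalization.AtPrime.ringKrullDim_eq_height P]
  exact_mod_cast Order.one_le_iff_ne_zero.mpr (Ideal.height_eq_zero_iff_eq_bot.not.mpr hP)

theorem IsS2.exists_isSMulRegular (h : IsS2 R N) (P : Ideal R) [P.IsPrime] (hP : P ≠ ⊥) :
    ∃ a ∈ maximalIdeal (Localization.AtPrime P),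
      IsSMulRegular (LocalizedModule P.primeCompl N) a := by
  obtain ⟨rs, hlen, hmem, hreg⟩ :=
    h P 1 (le_min one_le_two (one_le_ringKrullDim_localization_atPrime hP))
  obtain ⟨a, rfl⟩ := List.length_eq_one_iff.mp hlen
  exact ⟨a, hmem a (List.mem_singleton_self a),
    (RingTheory.Sequence.isWeaklyRegular_singleton_iff _ a).mp hreg⟩

theorem IsS2.isTorsionFree [IsNoetherianRing R] (h : IsS2 R N) : Module.IsTorsionFree R N := by
  refine .of_smul_eq_zero fun r x hrx => or_iff_not_imp_right.mpr fun hx => ?_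
  by_contra hr
  obtain ⟨P, hP, hxP⟩ := exists_le_isAssociatedPrime_of_isNoetherianRing R x hx
  have := hP.isPrime
  have hrP : r ∈ P := hxP <| by
    rw [Submodule.bot_colon']
    exact (Submodule.mem_annihilator_span_singleton x r).mpr hrx
  obtain ⟨a, ha, hreg⟩ := h.exists_isSMulRegular P ((Submodule.ne_bot_iff P).mpr ⟨r, hrP, hr⟩)
  have hass := Module.associatedPrimes.mem_associatedPrimes_atPrime_of_mem_associatedPrimes hP
  have hzd := biUnion_associatedPrimes_eq_compl_regular (Localization.AtPrime P)
    (LocalizedModule.AtPrime P N)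
  exact (hzd ▸ Set.mem_biUnion hass ha : a ∈ {a | IsSMulRegular _ a}ᶜ) hreg

end S2

theorem RankOne.nontrivial {R N : Type*} [CommRing R] [IsDomain R] [AddCommGroup N]
    [Module R N] (hN : RankOne R N) : Nontrivial N := by
  by_contra hsub
  rw [not_nontrivial_iff_subsingleton] at hsub
  simp [RankOne] at hN

section RankOne

variable {R : Type*} [CommRing R] [IsDomain R] [IsIntegrallyClosed R]
  {N N' : Type*} [AddCommGroup N] [Module R N] [AddCommGroup N'] [Module R N']

theorem RankOne.exists_eq_smul_id [Module.Finite R N] [Module.IsTorsionFree R N]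
    (hN : RankOne R N) (φ : N →ₗ[R] N) : ∃ r : R, φ = r • LinearMap.id := by
  let S := nonZeroDivisors R
  let mk := LocalizedModule.mkLinearMap S N
  have hmk : Function.Injective mk := (IsLocalizedModule.injective_iff_isRegular S mk).mpr
    fun s => (isRegular_iff_mem_nonZeroDivisors.mpr s.2).isSMulRegular
  obtain ⟨c, hc, -⟩ := ((IsLocalizedModule.map S mk mk φ).extendScalarsOfIsLocalization S
    (FractionRing R)).existsUnique_eq_smul_id_of_finrank_eq_one (Module.finrank_eq_of_rank_eq hN)
  have hφ (x : N) : mk (φ x) = c • mk x := by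
    rw [← IsLocalizedModule.map_apply S mk mk φ x]
    exact LinearMap.congr_fun hc (mk x)
  have hrange : LinearMap.range mk ≠ ⊥ := by
    have := hN.nontrivial
    obtain ⟨x, hx⟩ := exists_ne (0 : N)
    exact (Submodule.ne_bot_iff _).mpr ⟨mk x, ⟨x, rfl⟩, (map_ne_zero_iff _ hmk).mpr hx⟩
  obtain ⟨r, rfl⟩ := IsIntegrallyClosed.isIntegral_iff.mp <|
    isIntegral_of_smul_mem_submodule (LinearMap.range mk) hrange
      (LinearMap.range_eq_map mk ▸ Module.Finite.fg_top.map mk) c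
      (by rintro _ ⟨x, rfl⟩; exact ⟨φ x, hφ x⟩)
  exact ⟨r, LinearMap.ext fun x => hmk (by simp [hφ, algebraMap_smul])⟩

theorem RankOne.nonempty_linearEquiv_of_comp_eq_smul_id [Module.Finite R N']
    [Module.IsTorsionFree R N'] (hN : RankOne R N) (hN' : RankOne R N') {f : N →ₗ[R] N'}
    {g : N' →ₗ[R] N} {r : R} (hr : IsUnit r) (hgf : g ∘ₗ f = r • LinearMap.id) :
    Nonempty (N ≃ₗ[R] N') := by
  obtain ⟨r', hfg⟩ := hN'.exists_eq_smul_id (f ∘ₗ g)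
  have := hN.nontrivial
  obtain ⟨x, hx⟩ := exists_ne (0 : N)
  have hgfx : g (f x) = r • x := LinearMap.congr_fun hgf x
  have hfx : f x ≠ 0 := fun h0 => hx <| hr.smul_eq_zero.mp <| by simp [← hgfx, h0]
  have hr' : r' = r := smul_left_injective R hfx <| by
    simpa [hgfx] using (LinearMap.congr_fun hfg (f x)).symm
  subst hr'
  exact ⟨.ofLinearMap f (((hr.unit⁻¹ : Rˣ) : R) • g)
    (by rw [LinearMap.comp_smul, hfg, smul_smul, hr.val_inv_mul, one_smul])
    (by rw [LinearMap.smul_comp, hgf, smul_smul, hr.val_inv_mul, one_smul])⟩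

end RankOne

section DirectSummand

variable {R M N P : Type*} [CommRing R] [AddCommGroup M] [Module R M] [AddCommGroup N]
  [Module R N] [AddCommGroup P] [Module R P]

theorem IsDirectSummand.of_comp_eq_smul_id {f : M →ₗ[R] N} {g : N →ₗ[R] M} {u : R}
    (hu : IsUnit u) (h : g ∘ₗ f = u • LinearMap.id) : IsDirectSummand R M N :=
  ⟨f, ((hu.unit⁻¹ : Rˣ) : R) • g, by
    rw [LinearMap.smul_comp, h, smul_smul, hu.val_inv_mul, one_smul]⟩

theorem LinearEquiv.isDirectSummand (e : M ≃ₗ[R] N) : IsDirectSummand R M N :=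
  ⟨e, e.symm, by ext; simp⟩

theorem IsDirectSummand.trans (hMN : IsDirectSummand R M N) (hNP : IsDirectSummand R N P) :
    IsDirectSummand R M P := by
  obtain ⟨ι, π, h⟩ := hMN
  obtain ⟨ι', π', h'⟩ := hNP
  refine ⟨ι' ∘ₗ ι, π ∘ₗ π', ?_⟩
  rw [LinearMap.comp_assoc, ← LinearMap.comp_assoc ι, h', LinearMap.id_comp, h]

theorem IsDirectSummand.prod {M' N' : Type*} [AddCommGroup M'] [Module R M'] [AddCommGroup N']
    [Module R N'] (hM : IsDirectSummand R M M') (hN : IsDirectSummand R N N') :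
    IsDirectSummand R (M × N) (M' × N') := by
  obtain ⟨ι, π, h⟩ := hM
  obtain ⟨ι', π', h'⟩ := hN
  exact ⟨ι.prodMap ι', π.prodMap π', by rw [LinearMap.prodMap_comp, h, h', LinearMap.prodMap_id]⟩

theorem IsDirectSummand.rfl : IsDirectSummand R M M :=
  (LinearEquiv.refl R M).isDirectSummand

def LinearMap.projKer (ι : M →ₗ[R] N) (π : N →ₗ[R] M) (h : π ∘ₗ ι = LinearMap.id) :
    N →ₗ[R] LinearMap.ker π :=
  LinearMap.codRestrict _ (LinearMap.id - ι ∘ₗ π) fun x => by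
    simpa [sub_eq_zero] using (LinearMap.congr_fun h (π x)).symm

@[simp]
theorem LinearMap.coe_projKer_apply (ι : M →ₗ[R] N) (π : N →ₗ[R] M)
    (h : π ∘ₗ ι = LinearMap.id) (x : N) : (projKer ι π h x : N) = x - ι (π x) := rfl

theorem isDirectSummand_prod_ker (ι : M →ₗ[R] N) (π : N →ₗ[R] M) (h : π ∘ₗ ι = LinearMap.id) :
    IsDirectSummand R (M × LinearMap.ker π) N := by
  have hπι (x : M) : π (ι x) = x := LinearMap.congr_fun h x
  refine ⟨ι.coprod (LinearMap.ker π).subtype, π.prod (ι.projKer π h), ?_⟩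
  ext x <;> simp [hπι]

theorem isDirectSummand_ker_of_comp_eq_smul_id {ι₀ : M →ₗ[R] P} {π₀ : P →ₗ[R] M}
    (h₀ : π₀ ∘ₗ ι₀ = LinearMap.id) {ι : N →ₗ[R] P} {π : P →ₗ[R] N} (h : π ∘ₗ ι = LinearMap.id)
    {r : R} (hr : IsUnit (1 - r)) (hcomp : (π ∘ₗ ι₀) ∘ₗ (π₀ ∘ₗ ι) = r • LinearMap.id) :
    IsDirectSummand R N (LinearMap.ker π₀) := by
  refine .of_comp_eq_smul_id (f := ι₀.projKer π₀ h₀ ∘ₗ ι)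
    (g := π ∘ₗ (LinearMap.ker π₀).subtype) hr (LinearMap.ext fun x => ?_)
  have hπι : π (ι x) = x := LinearMap.congr_fun h x
  have hr' : π (ι₀ (π₀ (ι x))) = r • x := LinearMap.congr_fun hcomp x
  simp [hπι, hr', sub_smul]

end DirectSummand

theorem isDirectSummand_pi_of_comp_mem_maximalIdeal {R : Type*} [CommRing R] [IsLocalRing R]
    {t : ℕ} {M : Fin t → Type*} [∀ i, AddCommGroup (M i)] [∀ i, Module R (M i)]
    {C : Type*} [AddCommGroup C] [Module R C]
    (hcomp : ∀ i j, i ≠ j → ∀ (f : M i →ₗ[R] M j) (g : M j →ₗ[R] M i),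
      ∃ r ∈ maximalIdeal R, g ∘ₗ f = r • LinearMap.id)
    (hsummand : ∀ i, IsDirectSummand R (M i) C) :
    IsDirectSummand R (∀ i, M i) C := by
  induction t generalizing C with
  | zero => exact ⟨0, 0, Subsingleton.elim _ _⟩
  | succ n ih =>
    obtain ⟨ι₀, π₀, h₀⟩ := hsummand 0
    have hker : IsDirectSummand R (∀ j : Fin n, M j.succ) (LinearMap.ker π₀) := by
      refine ih (fun i j hij => hcomp _ _ (Fin.succ_injective _ |>.ne hij)) fun j => ?_
      obtain ⟨ι, π, h⟩ := hsummand j.succ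
      obtain ⟨r, hr, hcomp_r⟩ := hcomp j.succ 0 (Fin.succ_ne_zero j) (π₀ ∘ₗ ι) (π ∘ₗ ι₀)
      exact isDirectSummand_ker_of_comp_eq_smul_id h₀ h
        (IsLocalRing.isUnit_one_sub_self_of_mem_nonunits r hr) hcomp_r
    exact (Fin.consLinearEquiv R M).symm.isDirectSummand.trans <|
      (IsDirectSummand.rfl.prod hker).trans (isDirectSummand_prod_ker ι₀ π₀ h₀)

theorem directSum_of_pairwise_nonisomorphic_rank_one_summands_general
    (R : Type*) [CommRing R] [IsNoetherianRing R] [IsLocalRing R] [IsDomain R]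
    [IsIntegrallyClosed R]
    (C : Type*) [AddCommGroup C] [Module R C]
    (t : ℕ) (M : Fin t → Type*)
    [∀ i, AddCommGroup (M i)] [∀ i, Module R (M i)] [∀ i, Module.Finite R (M i)]
    (hrk : ∀ i, RankOne R (M i)) (hS2 : ∀ i, IsS2 R (M i))
    (hdistinct : ∀ i j, i ≠ j → ¬ Nonempty (M i ≃ₗ[R] M j))
    (hsummand : ∀ i, IsDirectSummand R (M i) C) :
    IsDirectSummand R (∀ i, M i) C := by
  have (i : Fin t) : Module.IsTorsionFree R (M i) := (hS2 i).isTorsionFree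
  refine isDirectSummand_pi_of_comp_mem_maximalIdeal (fun i j hij f g => ?_) hsummand
  obtain ⟨r, hr⟩ := (hrk i).exists_eq_smul_id (g ∘ₗ f)
  exact ⟨r, fun hu => hdistinct i j hij ((hrk i).nonempty_linearEquiv_of_comp_eq_smul_id
    (hrk j) hu hr), hr⟩

/-- Over a Noetherian normal local domain, if `M₁, …, M_t` are pairwise non-isomorphic
finitely generated rank-one `(S₂)` modules, each of which is a direct summand of a
finitely generated `(S₂)` module `C`, then `M₁ ⊕ ⋯ ⊕ M_t` is a direct summand of `C`. -/
theorem directSum_of_pairwise_nonisomorphic_rank_one_summands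
    (R : Type*) [CommRing R] [IsNoetherianRing R] [IsLocalRing R] [IsDomain R]
    [IsIntegrallyClosed R]
    (C : Type*) [AddCommGroup C] [Module R C] [Module.Finite R C] (hC : IsS2 R C)
    (t : ℕ) (M : Fin t → Type*)
    [∀ i, AddCommGroup (M i)] [∀ i, Module R (M i)] [∀ i, Module.Finite R (M i)]
    (hrk : ∀ i, RankOne R (M i)) (hS2 : ∀ i, IsS2 R (M i))
    (hdistinct : ∀ i j, i ≠ j → ¬ Nonempty (M i ≃ₗ[R] M j))
    (hsummand : ∀ i, IsDirectSummand R (M i) C) :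
    IsDirectSummand R (∀ i, M i) C :=
  directSum_of_pairwise_nonisomorphic_rank_one_summands_general R C t M hrk hS2 hdistinct hsummand
end

section
/- Let (R, m, k) be a Noetherian local F-finite strongly F-regular ring of prime characteristic p > 0 and let M be a finitely generated torsion-free R-module. Then ⋂_{e ∈ ℕ} I_e(M) = 0, where I_e(M) = {η ∈ M : φ(F^e_* η) ∈ m for every R-linear map φ : F^e_* M → R}. -/
open IsLocalRing

/-- An `R`-linear map `F^e_* M → R`, encoded as an additive map `φ : M → R`
satisfying `φ ((r ^ p ^ e) • m) = r * φ m` for all `r : R`, `m : M`. -/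
def IsFrobeniusLinearMap {R : Type*} (M : Type*) [CommRing R] [AddCommGroup M]
    [Module R M] (p e : ℕ) (φ : M → R) : Prop :=
  (∀ x y : M, φ (x + y) = φ x + φ y) ∧
    ∀ (r : R) (m : M), φ (r ^ p ^ e • m) = r * φ m

/-- `R` is `F`-finite: `R` is a finitely generated module over itself via the
Frobenius endomorphism `r ↦ r ^ p`. -/
def FFinite (R : Type*) [CommRing R] (p : ℕ) : Prop :=
  ∃ s : Finset R, ∀ r : R, ∃ c : R → R, r = ∑ a ∈ s, c a ^ p * a

/-- `R` is strongly `F`-regular: for every nonzero `r : R` there are `e : ℕ` and an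
`R`-linear map `φ : F^e_* R → R` with `φ (F^e_* r) = 1`. -/
def StronglyFRegular (R : Type*) [CommRing R] (p : ℕ) : Prop :=
  ∀ r : R, r ≠ 0 → ∃ (e : ℕ) (φ : R → R), IsFrobeniusLinearMap R p e φ ∧ φ r = 1

/-!
A nonzero `η` in a finitely generated torsion-free module over a domain is detected by some
`f : M →ₗ[R] R`: embed `M` into its localization at the nonzero elements, a vector space over
the fraction field, take a functional there that does not vanish on `η`, and clear its
denominators using that `M` is finitely generated. Strong `F`-regularity gives
`ψ : F^e_* R → R` with `ψ (F^e_* (f η)) = 1`, so `ψ ∘ F^e_* f` sends `η` to a unit and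
`η ∉ I_e(M)`. Torsion-freeness together with `η ≠ 0` already forces `R` to be a domain.
-/

section

variable {R M : Type*} [CommRing R] [AddCommGroup M] [Module R M]

variable (R) in
theorem exists_linearMap_fractionRing_ne_zero [IsDomain R] [Module.IsTorsionFree R M]
    {x : M} (hx : x ≠ 0) : ∃ g : M →ₗ[R] FractionRing R, g x ≠ 0 := by
  have hinj : Function.Injective (LocalizedModule.mkLinearMap (nonZeroDivisors R) M) :=
    (IsLocalizedModule.injective_iff_isRegular _ _).mpr fun c =>
      IsSMulRegular.of_ne_zero (nonZeroDivisors.ne_zero c.2)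
  obtain ⟨f, hf⟩ := Module.Projective.exists_dual_ne_zero (FractionRing R)
    ((map_ne_zero_iff _ hinj).mpr hx)
  exact ⟨f.restrictScalars R ∘ₗ LocalizedModule.mkLinearMap _ M, hf⟩

theorem exists_algebraLinearMap_comp_eq_smul {K : Type*} [CommRing K] [Algebra R K]
    [IsFractionRing R K] [Module.Finite R M] (g : M →ₗ[R] K) :
    ∃ b ∈ nonZeroDivisors R, ∃ f : Module.Dual R M, Algebra.linearMap R K ∘ₗ f = b • g := by
  obtain ⟨b, hb, hint⟩ := FractionalIdeal.isFractional_of_fg (S := nonZeroDivisors R)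
    (Module.Finite.fg_top.map g)
  have hinj : Function.Injective (Algebra.linearMap R K) := IsFractionRing.injective R K
  have hrange : ∀ m, (b • g) m ∈ LinearMap.range (Algebra.linearMap R K) :=
    fun m => hint _ (Submodule.mem_map_of_mem Submodule.mem_top)
  refine ⟨b, hb, ((LinearEquiv.ofInjective _ hinj).symm : _ →ₗ[R] R) ∘ₗ
    (b • g).codRestrict _ hrange, ?_⟩
  ext m
  simp only [LinearMap.comp_apply, LinearEquiv.coe_coe, LinearEquiv.ofInjective_symm_apply,
    LinearMap.codRestrict_apply]

theorem Module.exists_dual_ne_zero_of_isTorsionFree [IsDomain R] [Module.Finite R M]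
    [Module.IsTorsionFree R M] {x : M} (hx : x ≠ 0) : ∃ f : Module.Dual R M, f x ≠ 0 := by
  obtain ⟨g, hg⟩ := exists_linearMap_fractionRing_ne_zero R hx
  obtain ⟨b, hb, f, hf⟩ := exists_algebraLinearMap_comp_eq_smul g
  refine ⟨f, fun hfx => hg ?_⟩
  have hbg : b • g x = 0 := by
    rw [← LinearMap.smul_apply, ← hf, LinearMap.comp_apply, hfx, map_zero]
  exact (smul_eq_zero_iff_right (nonZeroDivisors.ne_zero hb)).mp hbg

theorem NoZeroDivisors.of_smul_eq_zero_of_ne_zero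
    (htf : ∀ (r : R) (x : M), r • x = 0 → r = 0 ∨ x = 0) {x : M} (hx : x ≠ 0) :
    NoZeroDivisors R where
  eq_zero_or_eq_zero_of_mul_eq_zero {a b} hab := by
    rcases htf a (b • x) (by rw [smul_smul, hab, zero_smul]) with ha | hbx
    · exact Or.inl ha
    · exact Or.inr ((htf b x hbx).resolve_right hx)

namespace IsFrobeniusLinearMap

variable {N : Type*} [AddCommGroup N] [Module R N] {p e : ℕ}

theorem map_zero {φ : M → R} (hφ : IsFrobeniusLinearMap M p e φ) : φ 0 = 0 := by
  simpa using hφ.1 0 0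

theorem comp_linearMap {ψ : N → R} (hψ : IsFrobeniusLinearMap N p e ψ) (f : M →ₗ[R] N) :
    IsFrobeniusLinearMap M p e (ψ ∘ f) :=
  ⟨fun x y => by simp only [Function.comp_apply, map_add, hψ.1],
    fun r m => by simp only [Function.comp_apply, map_smul, hψ.2]⟩

end IsFrobeniusLinearMap

theorem StronglyFRegular.exists_isFrobeniusLinearMap_apply_eq_one [IsDomain R] [Module.Finite R M]
    [Module.IsTorsionFree R M] {p : ℕ} (hR : StronglyFRegular R p) {x : M} (hx : x ≠ 0) :
    ∃ (e : ℕ) (φ : M → R), IsFrobeniusLinearMap M p e φ ∧ φ x = 1 := by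
  obtain ⟨f, hf⟩ := Module.exists_dual_ne_zero_of_isTorsionFree (R := R) hx
  obtain ⟨e, ψ, hψ, hψf⟩ := hR (f x) hf
  exact ⟨e, ψ ∘ f, hψ.comp_linearMap f, hψf⟩

end

theorem iInter_frobenius_splitting_submodule_eq_bot_general
    (R : Type*) [CommRing R] [IsLocalRing R]
    (p : ℕ) (hSFR : StronglyFRegular R p)
    (M : Type*) [AddCommGroup M] [Module R M] [Module.Finite R M]
    (htf : ∀ (r : R) (x : M), r • x = 0 → r = 0 ∨ x = 0) :
    (⋂ e : ℕ, {η : M | ∀ φ : M → R, IsFrobeniusLinearMap M p e φ →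
      φ η ∈ IsLocalRing.maximalIdeal R}) = {0} := by
  ext η
  simp only [Set.mem_iInter, Set.mem_ofPred_eq, Set.mem_singleton_iff]
  refine ⟨fun hη => ?_, fun hη e φ hφ => hη ▸ hφ.map_zero ▸ zero_mem _⟩
  by_contra hne
  have : NoZeroDivisors R := .of_smul_eq_zero_of_ne_zero htf hne
  have : IsDomain R := NoZeroDivisors.to_isDomain R
  have : Module.IsTorsionFree R M := .of_smul_eq_zero htf
  obtain ⟨e, φ, hφ, hφη⟩ := hSFR.exists_isFrobeniusLinearMap_apply_eq_one hne
  exact notMem_maximalIdeal.mpr isUnit_one (hφη ▸ hη e φ hφ)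

/-- For a Noetherian local `F`-finite strongly `F`-regular ring `R` of prime
characteristic `p > 0` and a finitely generated torsion-free `R`-module `M`, the
intersection `⋂_{e ∈ ℕ} I_e(M)` is zero, where
`I_e(M) = {η ∈ M : φ (F^e_* η) ∈ m for every R-linear φ : F^e_* M → R}`. -/
theorem iInter_frobenius_splitting_submodule_eq_bot
    (R : Type*) [CommRing R] [IsNoetherianRing R] [IsLocalRing R]
    (p : ℕ) (hp : p.Prime) [CharP R p]
    (hFF : FFinite R p) (hSFR : StronglyFRegular R p)
    (M : Type*) [AddCommGroup M] [Module R M] [Module.Finite R M]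
    (htf : ∀ (r : R) (x : M), r • x = 0 → r = 0 ∨ x = 0) :
    (⋂ e : ℕ, {η : M | ∀ φ : M → R, IsFrobeniusLinearMap M p e φ →
      φ η ∈ IsLocalRing.maximalIdeal R}) = {0} :=
  iInter_frobenius_splitting_submodule_eq_bot_general R p hSFR M htf
end
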